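/- Let M > 0, Q ≠ 0 and μ := 8Q²/(9M²), and assume 0 < μ < 1. Then the function I(s) := Λ₊(1) − Λ₋(s) is continuous and strictly increasing on [μ,1], satisfies I(μ) < 0 and I(1) > 0, and therefore there exists a unique h ∈ (μ,1) with Λ₋(h) = Λ₊(1). -/
import Mathlib


noncomputable section

/-- `Λ₋`, defined for `β := 9sM² − 8Q² ≥ 0`. -/
def Λminus (M Q s : ℝ) : ℝ :=
  1 / (32 * s ^ 2 * Q ^ 6) *
    (8 * Q ^ 4 - (9 * s * M ^ 2 - 8 * Q ^ 2) * (9 * s * M ^ 2 - 8 * Q ^ 2 + 4 * Q ^ 2)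
      - 3 * Real.sqrt (s * M ^ 2 * (9 * s * M ^ 2 - 8 * Q ^ 2) ^ 3))

/-- `Λ₊`, defined for `β := 9sM² − 8Q² ≥ 0`. -/
def Λplus (M Q s : ℝ) : ℝ :=
  1 / (32 * s ^ 2 * Q ^ 6) *
    (8 * Q ^ 4 - (9 * s * M ^ 2 - 8 * Q ^ 2) * (9 * s * M ^ 2 - 8 * Q ^ 2 + 4 * Q ^ 2)
      + 3 * Real.sqrt (s * M ^ 2 * (9 * s * M ^ 2 - 8 * Q ^ 2) ^ 3))

lemma lamMinus_eq (M Q s : ℝ) (hM : 0 < M) (hQ : Q ≠ 0) (hs : 0 < s)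
    (hβ : 0 ≤ 9 * s * M ^ 2 - 8 * Q ^ 2) :
    Λminus M Q s = 3 * M ^ 4 / (256 * Q ^ 6) *
      ((1 - Real.sqrt ((9 * s * M ^ 2 - 8 * Q ^ 2) / (s * M ^ 2))) *
        (3 + Real.sqrt ((9 * s * M ^ 2 - 8 * Q ^ 2) / (s * M ^ 2))) ^ 3) := by
  set t := Real.sqrt ((9 * s * M ^ 2 - 8 * Q ^ 2) / (s * M ^ 2)) with ht
  have hA : 0 < s * M ^ 2 := by positivity
  have ht0 : 0 ≤ t := Real.sqrt_nonneg _
  have ht2 : t ^ 2 = (9 * s * M ^ 2 - 8 * Q ^ 2) / (s * M ^ 2) :=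
    Real.sq_sqrt (div_nonneg hβ hA.le)
  have hβeq : 9 * s * M ^ 2 - 8 * Q ^ 2 = s * M ^ 2 * t ^ 2 := by
    rw [ht2]; field_simp
  have hQ2 : Q ^ 2 = s * M ^ 2 * (9 - t ^ 2) / 8 := by
    linear_combination (-1/8 : ℝ) * hβeq
  have hQ2' : Q ^ 2 ≠ 0 := pow_ne_zero 2 hQ
  have h9 : (9 : ℝ) - t ^ 2 ≠ 0 := by
    intro h; exact hQ2' (by rw [hQ2, h]; ring)
  have hsqrt : Real.sqrt (s * M ^ 2 * (9 * s * M ^ 2 - 8 * Q ^ 2) ^ 3)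
      = (s * M ^ 2) ^ 2 * t ^ 3 := by
    rw [hβeq, show s * M ^ 2 * (s * M ^ 2 * t ^ 2) ^ 3 = ((s * M ^ 2) ^ 2 * t ^ 3) ^ 2 by ring]
    exact Real.sqrt_sq (by positivity)
  unfold Λminus
  rw [hsqrt, hβeq, show Q ^ 4 = (Q ^ 2) ^ 2 by ring, show Q ^ 6 = (Q ^ 2) ^ 3 by ring, hQ2]
  field_simp
  ring

lemma lamPlus_eq (M Q s : ℝ) (hM : 0 < M) (hQ : Q ≠ 0) (hs : 0 < s)
    (hβ : 0 ≤ 9 * s * M ^ 2 - 8 * Q ^ 2) :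
    Λplus M Q s = 3 * M ^ 4 / (256 * Q ^ 6) *
      ((1 + Real.sqrt ((9 * s * M ^ 2 - 8 * Q ^ 2) / (s * M ^ 2))) *
        (3 - Real.sqrt ((9 * s * M ^ 2 - 8 * Q ^ 2) / (s * M ^ 2))) ^ 3) := by
  set t := Real.sqrt ((9 * s * M ^ 2 - 8 * Q ^ 2) / (s * M ^ 2)) with ht
  have hA : 0 < s * M ^ 2 := by positivity
  have ht0 : 0 ≤ t := Real.sqrt_nonneg _
  have ht2 : t ^ 2 = (9 * s * M ^ 2 - 8 * Q ^ 2) / (s * M ^ 2) :=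
    Real.sq_sqrt (div_nonneg hβ hA.le)
  have hβeq : 9 * s * M ^ 2 - 8 * Q ^ 2 = s * M ^ 2 * t ^ 2 := by
    rw [ht2]; field_simp
  have hQ2 : Q ^ 2 = s * M ^ 2 * (9 - t ^ 2) / 8 := by
    linear_combination (-1/8 : ℝ) * hβeq
  have hQ2' : Q ^ 2 ≠ 0 := pow_ne_zero 2 hQ
  have h9 : (9 : ℝ) - t ^ 2 ≠ 0 := by
    intro h; exact hQ2' (by rw [hQ2, h]; ring)
  have hsqrt : Real.sqrt (s * M ^ 2 * (9 * s * M ^ 2 - 8 * Q ^ 2) ^ 3)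
      = (s * M ^ 2) ^ 2 * t ^ 3 := by
    rw [hβeq, show s * M ^ 2 * (s * M ^ 2 * t ^ 2) ^ 3 = ((s * M ^ 2) ^ 2 * t ^ 3) ^ 2 by ring]
    exact Real.sqrt_sq (by positivity)
  unfold Λplus
  rw [hsqrt, hβeq, show Q ^ 4 = (Q ^ 2) ^ 2 by ring, show Q ^ 6 = (Q ^ 2) ^ 3 by ring, hQ2]
  field_simp
  ring

/-- `g(t) = (1−t)(3+t)³` is strictly decreasing on `[0,∞)`. -/
lemma g_strictAnti {a b : ℝ} (ha : 0 ≤ a) (hab : a < b) :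
    (1 - b) * (3 + b) ^ 3 < (1 - a) * (3 + a) ^ 3 := by
  have h2 : a ^ 2 < b ^ 2 := by nlinarith
  have h3 : a ^ 3 < b ^ 3 := by nlinarith
  have h4 : a ^ 4 < b ^ 4 := by nlinarith
  nlinarith [h2, h3, h4]

set_option maxHeartbeats 1000000 in
/-- For `0 < μ = 8Q²/(9M²) < 1`, the function `I(s) = Λ₊(1) − Λ₋(s)` is continuous and
strictly increasing on `[μ,1]`, with `I(μ) < 0 < I(1)`; hence there is a unique
`h ∈ (μ,1)` with `Λ₋(h) = Λ₊(1)`. -/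
theorem exists_unique_h (M Q μ : ℝ)
    (hM : 0 < M) (hQ : Q ≠ 0) (hμ : μ = 8 * Q ^ 2 / (9 * M ^ 2))
    (hμ0 : 0 < μ) (hμ1 : μ < 1) :
    ContinuousOn (fun s => Λplus M Q 1 - Λminus M Q s) (Set.Icc μ 1) ∧
    StrictMonoOn (fun s => Λplus M Q 1 - Λminus M Q s) (Set.Icc μ 1) ∧
    Λplus M Q 1 - Λminus M Q μ < 0 ∧
    0 < Λplus M Q 1 - Λminus M Q 1 ∧
    ∃! h : ℝ, h ∈ Set.Ioo μ 1 ∧ Λminus M Q h = Λplus M Q 1 := by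
  have hQ2 : 0 < Q ^ 2 := by positivity
  have hμM : 9 * μ * M ^ 2 = 8 * Q ^ 2 := by
    rw [hμ]; field_simp
  have h89 : 8 * Q ^ 2 < 9 * M ^ 2 := by nlinarith
  -- basic facts for s ∈ [μ,1]
  have hpos : ∀ s ∈ Set.Icc μ 1, 0 < s := fun s hs => lt_of_lt_of_le hμ0 hs.1
  have hβ : ∀ s ∈ Set.Icc μ 1, 0 ≤ 9 * s * M ^ 2 - 8 * Q ^ 2 := by
    intro s hs; nlinarith [hs.1]
  -- continuity
  have hcontm : ContinuousOn (fun s => Λminus M Q s) (Set.Icc μ 1) := by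
    unfold Λminus
    apply ContinuousOn.mul
    · apply ContinuousOn.div continuousOn_const (by fun_prop)
      intro x hx
      have hx0 : 0 < x := hpos x hx
      positivity
    · apply ContinuousOn.sub (by fun_prop)
      exact (Continuous.continuousOn (by continuity))
  have hcont : ContinuousOn (fun s => Λplus M Q 1 - Λminus M Q s) (Set.Icc μ 1) :=
    continuousOn_const.sub hcontm
  -- the substitution t(s)
  set T : ℝ → ℝ := fun s => Real.sqrt ((9 * s * M ^ 2 - 8 * Q ^ 2) / (s * M ^ 2)) with hT
  have hTmono : ∀ a ∈ Set.Icc μ 1, ∀ b ∈ Set.Icc μ 1, a < b → T a < T b := by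
    intro a ha b hb hab
    have ha0 := hpos a ha
    have hb0 := hpos b hb
    apply Real.sqrt_lt_sqrt (div_nonneg (hβ a ha) (by positivity))
    rw [div_lt_div_iff₀ (by positivity) (by positivity)]
    nlinarith [mul_pos (mul_pos hQ2 (pow_pos hM 2)) (sub_pos.mpr hab)]
  have hTnonneg : ∀ s, 0 ≤ T s := fun s => Real.sqrt_nonneg _
  -- value at 1
  have h1mem : (1 : ℝ) ∈ Set.Icc μ 1 := ⟨hμ1.le, le_refl _⟩
  have hμmem : μ ∈ Set.Icc μ 1 := ⟨le_refl _, hμ1.le⟩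
  set t1 := T 1 with ht1
  have ht1pos : 0 < t1 := by
    apply Real.sqrt_pos.mpr
    apply div_pos (by nlinarith) (by positivity)
  have ht1sq : t1 ^ 2 = (9 * 1 * M ^ 2 - 8 * Q ^ 2) / (1 * M ^ 2) :=
    Real.sq_sqrt (div_nonneg (hβ 1 h1mem) (by positivity))
  have harg9 : (9 * 1 * M ^ 2 - 8 * Q ^ 2) / (1 * M ^ 2) < 9 := by
    rw [div_lt_iff₀ (by positivity)]; nlinarith
  have ht1lt3 : t1 < 3 := by nlinarith [ht1sq, Real.sqrt_nonneg ((9 * 1 * M ^ 2 - 8 * Q ^ 2) / (1 * M ^ 2))]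
  have hTμ : T μ = 0 := by
    simp only [hT]
    rw [show (9 * μ * M ^ 2 - 8 * Q ^ 2) / (μ * M ^ 2) = 0 by
      rw [div_eq_zero_iff]; left; linarith]
    exact Real.sqrt_zero
  set c := 3 * M ^ 4 / (256 * Q ^ 6) with hc
  have hcpos : 0 < c := by positivity
  have hminus : ∀ s ∈ Set.Icc μ 1, Λminus M Q s = c * ((1 - T s) * (3 + T s) ^ 3) :=
    fun s hs => lamMinus_eq M Q s hM hQ (hpos s hs) (hβ s hs)
  have hplus1 : Λplus M Q 1 = c * ((1 + t1) * (3 - t1) ^ 3) :=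
    lamPlus_eq M Q 1 hM hQ one_pos (hβ 1 h1mem)
  -- strict monotonicity
  have hmono : StrictMonoOn (fun s => Λplus M Q 1 - Λminus M Q s) (Set.Icc μ 1) := by
    intro a ha b hb hab
    simp only
    have := g_strictAnti (hTnonneg a) (hTmono a ha b hb hab)
    rw [hminus a ha, hminus b hb]
    have : c * ((1 - T b) * (3 + T b) ^ 3) < c * ((1 - T a) * (3 + T a) ^ 3) :=
      mul_lt_mul_of_pos_left this hcpos
    linarith
  -- sign at μ
  have hIμ : Λplus M Q 1 - Λminus M Q μ < 0 := by
    rw [hplus1, hminus μ hμmem, hTμ]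
    have key : (1 + t1) * (3 - t1) ^ 3 < (1 - 0) * (3 + 0) ^ 3 := by
      nlinarith [mul_pos (pow_pos ht1pos 2) (show (0:ℝ) < (t1 - 4) ^ 2 + 2 by positivity)]
    nlinarith [mul_lt_mul_of_pos_left key hcpos]
  -- sign at 1
  have hI1 : 0 < Λplus M Q 1 - Λminus M Q 1 := by
    rw [hplus1, hminus 1 h1mem, ← ht1]
    have key : (1 - t1) * (3 + t1) ^ 3 < (1 + t1) * (3 - t1) ^ 3 := by
      nlinarith [pow_pos ht1pos 3]
    nlinarith [mul_lt_mul_of_pos_left key hcpos]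
  refine ⟨hcont, hmono, hIμ, hI1, ?_⟩
  -- existence via IVT
  have hIoo : (0 : ℝ) ∈ Set.Ioo (Λplus M Q 1 - Λminus M Q μ) (Λplus M Q 1 - Λminus M Q 1) :=
    ⟨hIμ, hI1⟩
  have := intermediate_value_Ioo hμ1.le hcont hIoo
  obtain ⟨h, hmem, hval⟩ := this
  refine ⟨h, ⟨hmem, by simp only at hval; linarith⟩, ?_⟩
  rintro y ⟨hymem, hyval⟩
  have hy0 : Λplus M Q 1 - Λminus M Q y = 0 := by linarith
  have hh0 : Λplus M Q 1 - Λminus M Q h = 0 := hval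
  exact hmono.injOn (Set.Ioo_subset_Icc_self hymem) (Set.Ioo_subset_Icc_self hmem)
    (by rw [hy0, hh0])
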